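/- Let R be a 2,3-torsion free unital alternative ring with nontrivial idempotent e1 satisfying conditions (1)-(3). Then the centralizer of R12 in R is contained in R12 + Z(R): if a ∈ R commutes with every element of R12, then a ∈ R12 + Z(R). -/

import Mathlib

/-- Peirce idempotents: `pe e1 0 = e1`, `pe e1 1 = 1 - e1`. -/
def pe {R : Type*} [NonAssocRing R] (e1 : R) : Fin 2 → R := ![e1, 1 - e1]

/-- Membership in the Peirce component `R_{ij} = e_i R e_j`. -/
def InP {R : Type*} [NonAssocRing R] (e1 : R) (i j : Fin 2) (x : R) : Prop :=
  ∃ r : R, x = pe e1 i * r * pe e1 j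

/-- Condition (1): `x_{ij} R_{ji} = 0 ⟹ x_{ij} = 0` for `i ≠ j`. -/
def Cond1 {R : Type*} [NonAssocRing R] (e1 : R) : Prop :=
  ∀ i j : Fin 2, i ≠ j → ∀ x : R, InP e1 i j x →
    (∀ y : R, InP e1 j i y → x * y = 0) → x = 0

/-- Condition (2): `x_{11} R_{12} = 0` or `R_{21} x_{11} = 0` implies `x_{11} = 0`. -/
def Cond2 {R : Type*} [NonAssocRing R] (e1 : R) : Prop :=
  ∀ x : R, InP e1 0 0 x →
    ((∀ y : R, InP e1 0 1 y → x * y = 0) ∨ (∀ y : R, InP e1 1 0 y → y * x = 0)) → x = 0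

/-- Condition (3): `R_{12} x_{22} = 0` or `x_{22} R_{21} = 0` implies `x_{22} = 0`. -/
def Cond3 {R : Type*} [NonAssocRing R] (e1 : R) : Prop :=
  ∀ x : R, InP e1 1 1 x →
    ((∀ y : R, InP e1 0 1 y → y * x = 0) ∨ (∀ y : R, InP e1 1 0 y → x * y = 0)) → x = 0


/-!
Write `a = a11 + a12 + a21 + a22` in the Peirce decomposition. Comparing Peirce components in
`a x = x a` for `x ∈ R12` gives `a11 x = x a22` and `a21 R12 = 0 = R12 a21`, so `a21 = 0` by (1).
The associativity of suitable triples of Peirce components then turns conditions (2), (3) and (1)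
into: `a11` commutes with `R11`, `a22` commutes with `R22`, and `a22 y = y a11` for `y ∈ R21`.
Hence `a11 + a22` commutes with all of `R`, and in a 3-torsion free alternative ring such an
element lies in the nucleus, hence in the center.

In a 3-torsion free alternative ring the Teichmüller identity yields
`(y x, z, x) = x (x, y, z)` and `(x y, z, x) = (x, y, z) x`; applied with `x = e` they make
`(s, t, e)` vanish for Peirce components `s, t` unless `s, t ∈ R_ij` with `i ≠ j`, which gives
the Peirce multiplication rules.
-/

theorem mul_assoc_of_associator_eq_zero {R : Type*} [NonUnitalNonAssocRing R] {a b c : R}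
    (h : associator a b c = 0) : a * b * c = a * (b * c) :=
  sub_eq_zero.mp h

theorem associator_mul_eq_zero {R : Type*} [NonUnitalNonAssocRing R] {a b c e : R}
    (hc : c * e = 0) (h₁ : associator b c e = 0) (h₂ : associator (a * b) c e = 0)
    (h₃ : associator a (b * c) e = 0) : associator a b c * e = 0 := by
  simpa [h₁, h₂, h₃, hc, associator_apply a b 0] using associator_cocycle a b c e

class IsAlternative (R : Type*) [NonUnitalNonAssocRing R] : Prop where
  mul_self_mul (x y : R) : x * x * y = x * (x * y)
  mul_mul_self (x y : R) : y * x * x = y * (x * x)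

section Alternative

variable {R : Type*} [NonUnitalNonAssocRing R] [IsAlternative R]

theorem associator_self_left (x y : R) : associator x x y = 0 := by
  rw [associator_apply, IsAlternative.mul_self_mul, sub_self]

theorem associator_self_right (x y : R) : associator y x x = 0 := by
  rw [associator_apply, IsAlternative.mul_mul_self, sub_self]

theorem associator_swap_left (x y z : R) : associator y x z = -associator x y z := by
  have h := associator_self_left (x + y) z
  simp only [associator_apply, add_mul, mul_add] at h ⊢
  rw [IsAlternative.mul_self_mul, IsAlternative.mul_self_mul] at h
  linear_combination (norm := abel) h

theorem associator_swap_right (x y z : R) : associator x z y = -associator x y z := by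
  have h := associator_self_right (y + z) x
  simp only [associator_apply, add_mul, mul_add] at h ⊢
  rw [IsAlternative.mul_mul_self, IsAlternative.mul_mul_self] at h
  linear_combination (norm := abel) h

theorem associator_rotate (x y z : R) : associator y z x = associator x y z := by
  rw [associator_swap_right, associator_swap_left, neg_neg]

theorem associator_swap_outer (x y z : R) : associator z y x = -associator x y z := by
  rw [associator_swap_left, associator_rotate]

theorem associator_self_mid (x y : R) : associator x y x = 0 := by
  rw [associator_rotate, associator_self_left]

end Alternative

section Torsion

variable {R : Type*} [NonUnitalNonAssocRing R] [IsAlternative R]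
  (h3 : ∀ x : R, (3 : ℕ) • x = 0 → x = 0)
include h3

theorem associator_mul_self_left (x y z : R) :
    associator (y * x) z x = x * associator x y z := by
  have T1 := associator_cocycle x y z x
  have T2 := associator_cocycle y x z x
  have T3 := associator_cocycle x z y x
  have T4 := associator_cocycle z x y x
  rw [associator_rotate x y z, associator_self_mid, associator_swap_outer (z * x)] at T1
  rw [associator_self_mid, associator_swap_left (x * z), associator_rotate (z * x),
    associator_swap_left x y] at T2
  rw [associator_swap_outer x y z, associator_self_mid, associator_swap_outer (y * x),
    associator_swap_right x y z] at T3
  rw [associator_self_mid, associator_swap_left (x * y), associator_rotate (y * x),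
    associator_rotate y z x, associator_rotate x y z] at T4
  simp only [mul_zero, mul_neg, neg_mul] at T1 T2 T3 T4
  apply eq_of_sub_eq_zero
  apply h3
  linear_combination (norm := abel) -T1 + T4 - T2 - T2 + T3 + T3

theorem associator_self_mul_left (x y z : R) :
    associator (x * y) z x = associator x y z * x := by
  have T1 := associator_cocycle x y z x
  rw [associator_rotate x y z, associator_self_mid, associator_swap_outer (z * x),
    associator_mul_self_left h3 x z y, associator_swap_right x y z] at T1
  simp only [mul_neg, neg_neg] at T1
  linear_combination (norm := abel) -T1

theorem associator_self_mul_left_linear (x y z w : R) :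
    associator (x * y) z w + associator (w * y) z x =
      associator x y z * w + associator w y z * x := by
  have h := associator_self_mul_left h3 (x + w) y z
  have hx := associator_self_mul_left h3 x y z
  have hw := associator_self_mul_left h3 w y z
  simp only [associator_apply, add_mul, mul_add, sub_mul] at h hx hw ⊢
  linear_combination (norm := abel) h - hx - hw

theorem associator_mul_eq_self {a b c e : R} (ha : e * a = a) (h₁ : associator a b e = 0)
    (h₂ : associator (c * a) b e = 0) : associator a b c * e = associator a b c := by
  have := associator_self_mul_left_linear h3 e a b c
  rwa [ha, h₂, ← associator_rotate e a b, h₁, zero_mul, add_zero, zero_add,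
    ← associator_rotate c a b, eq_comm] at this

theorem moufang_left (x y z : R) : x * y * x * z = x * (y * (x * z)) := by
  have h1 : associator (x * y) x z = -(associator x y z * x) := by
    rw [associator_swap_right (x * y) z x, associator_self_mul_left h3]
  have h2 : associator x y (x * z) = associator x y z * x := by
    rw [associator_rotate (x * z) x y, associator_swap_right (x * z) y x,
      associator_self_mul_left h3, associator_swap_right x y z, neg_mul, neg_neg]
  simp only [associator_apply] at h1 h2
  linear_combination (norm := abel) h1 + h2

theorem mem_center_of_forall_mul_comm {z : R} (hz : ∀ w, z * w = w * z) :
    z ∈ Set.center R := by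
  have hnuc (x y : R) : associator x y z = 0 := by
    apply h3
    have h : associator z x y - associator x z y + associator x y z = 0 := by
      simp only [associator_apply, hz x, hz y, hz (x * y)]; abel
    rw [associator_rotate y z x, associator_rotate x y z, associator_swap_right x y z] at h
    linear_combination (norm := abel) h
  refine Set.mem_center_iff.2 ⟨fun w => hz w, fun x y => ?_, fun x y => ?_⟩
  · rw [← sub_eq_zero, ← neg_sub, ← associator_apply, ← associator_rotate, hnuc, neg_zero]
  · rw [← sub_eq_zero, ← associator_apply, hnuc]

end Torsion

/- The indices `0, 1 : Fin 2` of `InP` are the paper's `1, 2`; lemma names use the paper's. -/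

theorem exists_peirce_decomposition {R : Type*} [NonAssocRing R] (e a : R) :
    ∃ a11 a12 a21 a22 : R, InP e 0 0 a11 ∧ InP e 0 1 a12 ∧ InP e 1 0 a21 ∧ InP e 1 1 a22 ∧
      a = a11 + a12 + a21 + a22 :=
  ⟨_, _, _, _, ⟨a, rfl⟩, ⟨a, rfl⟩, ⟨a, rfl⟩, ⟨a, rfl⟩, by simp [pe, mul_sub, sub_mul]⟩

theorem InP.sub {R : Type*} [NonAssocRing R] {e : R} {i j : Fin 2} {x y : R}
    (hx : InP e i j x) (hy : InP e i j y) : InP e i j (x - y) := by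
  obtain ⟨r, rfl⟩ := hx
  obtain ⟨s, rfl⟩ := hy
  exact ⟨r - s, by rw [mul_sub, sub_mul]⟩

theorem InP.neg {R : Type*} [NonAssocRing R] {e : R} {i j : Fin 2} {x : R}
    (hx : InP e i j x) : InP e i j (-x) := by
  obtain ⟨r, rfl⟩ := hx
  exact ⟨-r, by rw [mul_neg, neg_mul]⟩

theorem eq_zero_of_ite_eq_ite {M : Type*} [Zero M] {i k : Fin 2} (hik : i ≠ k) {x : M}
    (h : (if i = 0 then x else 0) = if k = 0 then x else 0) : x = 0 := by
  fin_cases i <;> fin_cases k <;> simp_all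

section Peirce

variable {R : Type*} [NonAssocRing R] [IsAlternative R] {e : R}

theorem inP_iff (he : IsIdempotentElem e) {i j : Fin 2} {x : R} :
    InP e i j x ↔ e * x = (if i = 0 then x else 0) ∧ x * e = (if j = 0 then x else 0) := by
  have hl (r : R) : e * (e * r) = e * r := by rw [← IsAlternative.mul_self_mul, he.eq]
  have hr (r : R) : r * e * e = r * e := by rw [IsAlternative.mul_mul_self, he.eq]
  have hm (r : R) : e * (r * e) = e * r * e := by
    rw [← sub_eq_zero, ← neg_sub, ← associator_apply, associator_self_mid, neg_zero]
  constructor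
  · rintro ⟨r, rfl⟩
    fin_cases i <;> fin_cases j <;> simp [pe, mul_sub, sub_mul, hl, hr, hm]
  · rintro ⟨h1, h2⟩
    refine ⟨x, ?_⟩
    fin_cases i <;> fin_cases j <;> simp_all [pe, mul_sub, sub_mul]

namespace InP

variable (he : IsIdempotentElem e) {i j k l : Fin 2} {s t : R}
include he

theorem idem_mul (hs : InP e i j s) : e * s = if i = 0 then s else 0 := ((inP_iff he).1 hs).1

theorem mul_idem (hs : InP e i j s) : s * e = if j = 0 then s else 0 := ((inP_iff he).1 hs).2

theorem eq_zero_of_add_eq_zero {p q r : R} (hp : InP e 0 0 p) (hq : InP e 0 1 q)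
    (hr : InP e 1 0 r) (hs : InP e 1 1 s) (h : p + q + r + s = 0) :
    p = 0 ∧ q = 0 ∧ r = 0 ∧ s = 0 := by
  have hpq : p + q = 0 := by
    simpa [mul_add, hp.idem_mul he, hq.idem_mul he, hr.idem_mul he, hs.idem_mul he]
      using congrArg (e * ·) h
  have hpr : p + r = 0 := by
    simpa [add_mul, hp.mul_idem he, hq.mul_idem he, hr.mul_idem he, hs.mul_idem he]
      using congrArg (· * e) h
  obtain rfl : p = 0 := by
    simpa [add_mul, hp.mul_idem he, hq.mul_idem he] using congrArg (· * e) hpq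
  rw [zero_add] at hpq hpr
  exact ⟨rfl, hpq, hpr, by simpa [hpq, hpr] using h⟩

variable (h3 : ∀ x : R, (3 : ℕ) • x = 0 → x = 0)
include h3

/- `(s, t, e) e` can be computed from `e s` and also from `e t`, and `e (s, t, e)` from `s e` and
also from `t e`; when the two answers disagree the associator vanishes. -/
theorem associator_idem_eq_zero (hs : InP e i j s) (ht : InP e k l t)
    (h : ¬(i = k ∧ j = l ∧ i ≠ j)) : associator s t e = 0 := by
  have hP₁ : associator s t e * e = if i = 0 then associator s t e else 0 := calc
    _ = associator (e * s) t e := by rw [associator_self_mul_left h3, ← associator_rotate e]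
    _ = _ := by rw [hs.idem_mul he]; split_ifs <;> simp [associator_apply]
  have hP₂ : associator s t e * e = if k = 0 then associator s t e else 0 := calc
    _ = associator s (e * t) e := by
      rw [associator_swap_left (e * t) s e, associator_self_mul_left h3,
        ← associator_rotate e t s, associator_swap_left s t e, neg_mul, neg_neg]
    _ = _ := by rw [ht.idem_mul he]; split_ifs <;> simp [associator_apply]
  have hQ₁ : e * associator s t e = if j = 0 then associator s t e else 0 := calc
    _ = associator (s * e) t e := by rw [associator_mul_self_left h3, ← associator_rotate e]
    _ = _ := by rw [hs.mul_idem he]; split_ifs <;> simp [associator_apply]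
  have hQ₂ : e * associator s t e = if l = 0 then associator s t e else 0 := calc
    _ = associator s (t * e) e := by
      rw [associator_swap_left (t * e) s e, associator_mul_self_left h3,
        ← associator_rotate e t s, associator_swap_left s t e, mul_neg, neg_neg]
    _ = _ := by rw [ht.mul_idem he]; split_ifs <;> simp [associator_apply]
  have hjk : j = k → associator s t e = 0 := by
    rintro rfl
    rw [← neg_eq_zero, ← associator_swap_right, associator_apply, hs.mul_idem he, ht.idem_mul he]
    split_ifs <;> simp
  rcases eq_or_ne i k with rfl | hik
  · rcases eq_or_ne j l with rfl | hjl
    · exact hjk (by tauto)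
    · exact eq_zero_of_ite_eq_ite hjl (hQ₁.symm.trans hQ₂)
  · exact eq_zero_of_ite_eq_ite hik (hP₁.symm.trans hP₂)

theorem mul (hs : InP e i j s) (ht : InP e k l t) (h : ¬(i = k ∧ j = l ∧ i ≠ j)) :
    InP e i l (s * t) := by
  have hA := hs.associator_idem_eq_zero he h3 ht h
  have hA' : associator e s t = 0 := (associator_rotate e s t).symm.trans hA
  refine (inP_iff he).2 ⟨?_, ?_⟩
  · rw [← mul_assoc_of_associator_eq_zero hA', hs.idem_mul he]; split_ifs <;> simp
  · rw [mul_assoc_of_associator_eq_zero hA, ht.mul_idem he]; split_ifs <;> simp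

theorem mul_eq_zero (hs : InP e i j s) (ht : InP e k l t) (hjk : j ≠ k)
    (h : ¬(i = k ∧ j = l)) : s * t = 0 := by
  have hA := hs.associator_idem_eq_zero he h3 ht (by tauto)
  have hst : s * e * t = s * (e * t) := mul_assoc_of_associator_eq_zero
    ((associator_swap_right s t e).trans (by rw [hA, neg_zero]))
  rw [hs.mul_idem he, ht.idem_mul he, ite_mul, mul_ite, zero_mul, mul_zero] at hst
  exact eq_zero_of_ite_eq_ite hjk hst

theorem mul_of_R12 (hs : InP e 0 1 s) (ht : InP e 0 1 t) : InP e 1 0 (s * t) := by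
  have hes : e * s = s := by simpa using hs.idem_mul he
  have hse : s * e = 0 := by simpa using hs.mul_idem he
  have het : e * t = t := by simpa using ht.idem_mul he
  have hte : t * e = 0 := by simpa using ht.mul_idem he
  have h0 : e * (s * t) = 0 := by
    have := moufang_left h3 e s t
    rwa [hes, hse, zero_mul, het, eq_comm] at this
  refine (inP_iff he).2 ⟨by simpa using h0, ?_⟩
  calc s * t * e = associator s t e := by rw [associator_apply, hte, mul_zero, sub_zero]
    _ = associator e s t := associator_rotate e s t
    _ = _ := by rw [associator_apply, hes, h0, sub_zero]; simp

end InP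

variable (he : IsIdempotentElem e) (h3 : ∀ x : R, (3 : ℕ) • x = 0 → x = 0) {u v x y k m : R}
include he h3

/- Each associator `A` below satisfies `A e = 0` by the cocycle identity and `A e = A` by the
linearized `associator_self_mul_left`. -/
theorem associator_R11_R11_R12_eq_zero (hu : InP e 0 0 u) (hv : InP e 0 0 v)
    (hx : InP e 0 1 x) : associator u v x = 0 := by
  have hA : associator u v x * e = 0 := associator_mul_eq_zero (by simpa using hx.mul_idem he)
    (hv.associator_idem_eq_zero he h3 hx (by decide))
    ((hu.mul he h3 hv (by decide)).associator_idem_eq_zero he h3 hx (by decide))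
    (hu.associator_idem_eq_zero he h3 (hv.mul he h3 hx (by decide)) (by decide))
  rwa [associator_mul_eq_self h3 (by simpa using hu.idem_mul he)
    (hu.associator_idem_eq_zero he h3 hv (by decide))
    ((hx.mul he h3 hu (by decide)).associator_idem_eq_zero he h3 hv (by decide))] at hA

theorem associator_R11_R12_R22_eq_zero (hu : InP e 0 0 u) (hx : InP e 0 1 x)
    (hk : InP e 1 1 k) : associator u x k = 0 := by
  have hA : associator u x k * e = 0 := associator_mul_eq_zero (by simpa using hk.mul_idem he)
    (hx.associator_idem_eq_zero he h3 hk (by decide))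
    ((hu.mul he h3 hx (by decide)).associator_idem_eq_zero he h3 hk (by decide))
    (hu.associator_idem_eq_zero he h3 (hx.mul he h3 hk (by decide)) (by decide))
  rwa [associator_mul_eq_self h3 (by simpa using hu.idem_mul he)
    (hu.associator_idem_eq_zero he h3 hx (by decide))
    ((hk.mul he h3 hu (by decide)).associator_idem_eq_zero he h3 hx (by decide))] at hA

theorem associator_R12_R22_R22_eq_zero (hx : InP e 0 1 x) (hk : InP e 1 1 k)
    (hm : InP e 1 1 m) : associator x k m = 0 := by
  have hA : associator x k m * e = 0 := associator_mul_eq_zero (by simpa using hm.mul_idem he)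
    (hk.associator_idem_eq_zero he h3 hm (by decide))
    ((hx.mul he h3 hk (by decide)).associator_idem_eq_zero he h3 hm (by decide))
    (hx.associator_idem_eq_zero he h3 (hk.mul he h3 hm (by decide)) (by decide))
  rwa [associator_mul_eq_self h3 (by simpa using hx.idem_mul he)
    (hx.associator_idem_eq_zero he h3 hk (by decide))
    ((hm.mul he h3 hx (by decide)).associator_idem_eq_zero he h3 hk (by decide))] at hA

theorem associator_R21_R12_R22_eq_zero (hy : InP e 1 0 y) (hx : InP e 0 1 x)
    (hk : InP e 1 1 k) : associator y x k = 0 := by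
  have hA : associator y x k * e = 0 := associator_mul_eq_zero (by simpa using hk.mul_idem he)
    (hx.associator_idem_eq_zero he h3 hk (by decide))
    ((hy.mul he h3 hx (by decide)).associator_idem_eq_zero he h3 hk (by decide))
    (hy.associator_idem_eq_zero he h3 (hx.mul he h3 hk (by decide)) (by decide))
  rw [← associator_rotate, associator_mul_eq_self h3 (by simpa using hx.idem_mul he)
    (hx.associator_idem_eq_zero he h3 hk (by decide))
    ((hy.mul he h3 hx (by decide)).associator_idem_eq_zero he h3 hk (by decide))] at hA
  rwa [← associator_rotate]

theorem associator_R21_R11_R12_eq_zero (hy : InP e 1 0 y) (hu : InP e 0 0 u)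
    (hx : InP e 0 1 x) : associator y u x = 0 := by
  have hA : associator y u x * e = 0 := associator_mul_eq_zero (by simpa using hx.mul_idem he)
    (hu.associator_idem_eq_zero he h3 hx (by decide))
    ((hy.mul he h3 hu (by decide)).associator_idem_eq_zero he h3 hx (by decide))
    (hy.associator_idem_eq_zero he h3 (hu.mul he h3 hx (by decide)) (by decide))
  rw [← associator_rotate, associator_mul_eq_self h3 (by simpa using hu.idem_mul he)
    (hu.associator_idem_eq_zero he h3 hx (by decide))
    ((hy.mul he h3 hu (by decide)).associator_idem_eq_zero he h3 hx (by decide))] at hA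
  rwa [← associator_rotate]

variable {a11 a12 a21 a22 : R}

theorem peirce_eqs_of_commute_R12 (h11 : InP e 0 0 a11) (h12 : InP e 0 1 a12)
    (h21 : InP e 1 0 a21) (h22 : InP e 1 1 a22) (hx : InP e 0 1 x)
    (hcomm : (a11 + a12 + a21 + a22) * x = x * (a11 + a12 + a21 + a22)) :
    a11 * x = x * a22 ∧ a21 * x = 0 ∧ x * a21 = 0 := by
  have hsum : -(x * a21) + (a11 * x - x * a22) + (a12 * x - x * a12) + a21 * x = 0 := by
    simp only [add_mul, mul_add, h22.mul_eq_zero he h3 hx (by decide) (by decide),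
      hx.mul_eq_zero he h3 h11 (by decide) (by decide)] at hcomm
    linear_combination (norm := abel) hcomm
  obtain ⟨h₁, h₂, -, h₄⟩ := InP.eq_zero_of_add_eq_zero he
    (hx.mul he h3 h21 (by decide)).neg
    ((h11.mul he h3 hx (by decide)).sub (hx.mul he h3 h22 (by decide)))
    ((h12.mul_of_R12 he h3 hx).sub (hx.mul_of_R12 he h3 h12))
    (h21.mul he h3 hx (by decide)) hsum
  exact ⟨sub_eq_zero.mp h₂, h₄, neg_eq_zero.mp h₁⟩

theorem commute_add_of_peirce (h11 : InP e 0 0 a11) (h22 : InP e 1 1 a22)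
    (hD : ∀ w, InP e 0 0 w → a11 * w = w * a11) (hI : ∀ x, InP e 0 1 x → a11 * x = x * a22)
    (hA : ∀ y, InP e 1 0 y → a22 * y = y * a11) (hE : ∀ k, InP e 1 1 k → a22 * k = k * a22)
    (w : R) : (a11 + a22) * w = w * (a11 + a22) := by
  obtain ⟨w11, w12, w21, w22, h₁₁, h₁₂, h₂₁, h₂₂, rfl⟩ := exists_peirce_decomposition e w
  simp only [add_mul, mul_add, hD _ h₁₁, hI _ h₁₂, hA _ h₂₁, hE _ h₂₂,
    h22.mul_eq_zero he h3 h₁₁ (by decide) (by decide),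
    h₁₁.mul_eq_zero he h3 h22 (by decide) (by decide),
    h22.mul_eq_zero he h3 h₁₂ (by decide) (by decide),
    h₁₂.mul_eq_zero he h3 h11 (by decide) (by decide),
    h11.mul_eq_zero he h3 h₂₁ (by decide) (by decide),
    h₂₁.mul_eq_zero he h3 h22 (by decide) (by decide),
    h11.mul_eq_zero he h3 h₂₂ (by decide) (by decide),
    h₂₂.mul_eq_zero he h3 h11 (by decide) (by decide)]
  abel

variable (hI : ∀ x, InP e 0 1 x → a11 * x = x * a22)
include hI

theorem commute_R11_of_intertwine (hc2 : Cond2 e) (h11 : InP e 0 0 a11) (h22 : InP e 1 1 a22)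
    {w : R} (hw : InP e 0 0 w) : a11 * w = w * a11 := by
  refine sub_eq_zero.mp (hc2 _ ((h11.mul he h3 hw (by decide)).sub (hw.mul he h3 h11 (by decide)))
    (Or.inl fun y hy => ?_))
  have hwy := hw.mul he h3 hy (by decide)
  calc (a11 * w - w * a11) * y = a11 * w * y - w * a11 * y := sub_mul _ _ _
    _ = w * y * a22 - w * y * a22 := by
      rw [mul_assoc_of_associator_eq_zero (associator_R11_R11_R12_eq_zero he h3 h11 hw hy),
        hI _ hwy,
        mul_assoc_of_associator_eq_zero (associator_R11_R11_R12_eq_zero he h3 hw h11 hy), hI _ hy,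
        ← mul_assoc_of_associator_eq_zero (associator_R11_R12_R22_eq_zero he h3 hw hy h22)]
    _ = 0 := sub_self _

theorem commute_R22_of_intertwine (hc3 : Cond3 e) (h11 : InP e 0 0 a11) (h22 : InP e 1 1 a22)
    {k : R} (hk : InP e 1 1 k) : a22 * k = k * a22 := by
  refine sub_eq_zero.mp (hc3 _ ((h22.mul he h3 hk (by decide)).sub (hk.mul he h3 h22 (by decide)))
    (Or.inl fun y hy => ?_))
  have hyk := hy.mul he h3 hk (by decide)
  calc y * (a22 * k - k * a22) = y * (a22 * k) - y * (k * a22) := mul_sub _ _ _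
    _ = y * k * a22 - y * k * a22 := by
      rw [← mul_assoc_of_associator_eq_zero (associator_R12_R22_R22_eq_zero he h3 hy h22 hk),
        ← hI _ hy,
        mul_assoc_of_associator_eq_zero (associator_R11_R12_R22_eq_zero he h3 h11 hy hk), hI _ hyk,
        ← mul_assoc_of_associator_eq_zero (associator_R12_R22_R22_eq_zero he h3 hy hk h22)]
    _ = 0 := sub_self _

theorem intertwine_R21 (hc1 : Cond1 e) (h11 : InP e 0 0 a11) (h22 : InP e 1 1 a22)
    (hE : ∀ k, InP e 1 1 k → a22 * k = k * a22) (hy : InP e 1 0 y) : a22 * y = y * a11 := by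
  refine sub_eq_zero.mp (hc1 1 0 (by decide) _
    ((h22.mul he h3 hy (by decide)).sub (hy.mul he h3 h11 (by decide))) fun x hx => ?_)
  have hyx := hy.mul he h3 hx (by decide)
  have hassoc : associator a22 y x = 0 :=
    (associator_rotate a22 y x).symm.trans (associator_R21_R12_R22_eq_zero he h3 hy hx h22)
  calc (a22 * y - y * a11) * x = a22 * y * x - y * a11 * x := sub_mul _ _ _
    _ = y * x * a22 - y * x * a22 := by
      rw [mul_assoc_of_associator_eq_zero hassoc, hE _ hyx,
        mul_assoc_of_associator_eq_zero (associator_R21_R11_R12_eq_zero he h3 hy h11 hx), hI _ hx,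
        ← mul_assoc_of_associator_eq_zero (associator_R21_R12_R22_eq_zero he h3 hy hx h22)]
    _ = 0 := sub_self _

end Peirce

theorem centralizer_R12_sub_general (R : Type*) [NonAssocRing R]
    (hAlt1 : ∀ x y : R, x * x * y = x * (x * y))
    (hAlt2 : ∀ x y : R, y * x * x = y * (x * x))
    (h3 : ∀ x : R, (3 : ℕ) • x = 0 → x = 0)
    (e1 : R) (he : e1 * e1 = e1)
    (hc1 : Cond1 e1) (hc2 : Cond2 e1) (hc3 : Cond3 e1)
    (a : R) (hcomm : ∀ x : R, InP e1 0 1 x → a * x = x * a) :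
    ∃ b z : R, InP e1 0 1 b ∧ z ∈ Set.center R ∧ a = b + z := by
  have : IsAlternative R := ⟨hAlt1, hAlt2⟩
  obtain ⟨a11, a12, a21, a22, h11, h12, h21, h22, rfl⟩ := exists_peirce_decomposition e1 a
  have key {x} (hx : InP e1 0 1 x) :=
    peirce_eqs_of_commute_R12 he h3 h11 h12 h21 h22 hx (hcomm x hx)
  have ha21 : a21 = 0 := hc1 1 0 (by decide) a21 h21 fun y hy => (key hy).2.1
  have hI (x) (hx : InP e1 0 1 x) : a11 * x = x * a22 := (key hx).1
  have hE (k) (hk : InP e1 1 1 k) := commute_R22_of_intertwine he h3 hI hc3 h11 h22 hk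
  have hcentral := commute_add_of_peirce he h3 h11 h22
    (fun w hw => commute_R11_of_intertwine he h3 hI hc2 h11 h22 hw) hI
    (fun y hy => intertwine_R21 he h3 hI hc1 h11 h22 hE hy) hE
  exact ⟨a12, a11 + a22, h12, mem_center_of_forall_mul_comm h3 hcentral, by rw [ha21]; abel⟩

/-- the centralizer of $R_{12}$ is contained in $R_{12} + Z(R)$. -/
theorem centralizer_R12_sub (R : Type*) [NonAssocRing R]
    (hAlt1 : ∀ x y : R, x * x * y = x * (x * y))
    (hAlt2 : ∀ x y : R, y * x * x = y * (x * x))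
    (h2 : ∀ x : R, (2 : ℕ) • x = 0 → x = 0)
    (h3 : ∀ x : R, (3 : ℕ) • x = 0 → x = 0)
    (e1 : R) (he : e1 * e1 = e1) (he0 : e1 ≠ 0) (he1 : e1 ≠ 1)
    (hc1 : Cond1 e1) (hc2 : Cond2 e1) (hc3 : Cond3 e1)
    (a : R) (hcomm : ∀ x : R, InP e1 0 1 x → a * x = x * a) :
    ∃ b z : R, InP e1 0 1 b ∧ z ∈ Set.center R ∧ a = b + z :=
  centralizer_R12_sub_general R hAlt1 hAlt2 h3 e1 he hc1 hc2 hc3 a hcomm
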